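/- Let L = inf{p_0·(p_i/p_0)^{1/i} : i ≥ 1, p_i > 0}. Then (p^min_k)^{1/k} → L as k → ∞ along the subsequence of k with π(𝒮_k) > 0. As a consequence, L < 1. -/

import Mathlib

/-!
Write `L` for the infimum. In a possible tree every node of degree `d ≥ 1` has
`p_d p_0^(d-1) ≥ L^d`, and the degrees add up to `|T| - 1`; collecting one factor `p_0` per leaf
gives `π(T) ≥ p_0 L^(|T|-1)`, so `liminf (p^min_k)^(1/k) ≥ L`. Conversely, for `i` with `p_i > 0`,
the caterpillar made of `⌊(k-1)/i⌋` spine nodes of degree `i` has at most `k` nodes and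
probability `p_0 (p_i p_0^(i-1))^⌊(k-1)/i⌋`, whose `k`-th root tends to `p_0 (p_i/p_0)^(1/i)`.
Both bounds hold for every `k`, so the limit holds along all of `ℕ`. Finally `p_0 > 0` (mean one
and positive variance), so `p_i p_0^(i-1) ≤ 1 - p_0 < 1` and `L < 1`.
-/

open scoped BigOperators Classical Topology
open Filter

inductive PTree : Type
  | node : List PTree → PTree

namespace PTree

mutual
def size : PTree → ℕ
  | node ts => 1 + sizeList ts
def sizeList : List PTree → ℕ
  | [] => 0
  | t :: ts => size t + sizeList ts
end

mutual
def subtreesList : PTree → List PTree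
  | node ts => node ts :: subtreesListAux ts
def subtreesListAux : List PTree → List PTree
  | [] => []
  | t :: ts => subtreesList t ++ subtreesListAux ts
end

mutual
noncomputable def gwProb (p : ℕ → ℝ) : PTree → ℝ
  | node ts => p ts.length * gwProbList p ts
noncomputable def gwProbList (p : ℕ → ℝ) : List PTree → ℝ
  | [] => 1
  | t :: ts => gwProb p t * gwProbList p ts
end

mutual
noncomputable def gwProbNF (p : ℕ → ℝ) : PTree → ℝ
  | node [] => 1
  | node (t :: ts) => p (t :: ts).length * gwProbNFList p (t :: ts)
noncomputable def gwProbNFList (p : ℕ → ℝ) : List PTree → ℝ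
  | [] => 1
  | t :: ts => gwProbNF p t * gwProbNFList p ts
end

noncomputable def countFringe (T t : PTree) : ℕ :=
  ((subtreesList t).map (fun s => if s = T then 1 else 0)).sum

noncomputable def countFringeSet (S : Set PTree) (t : PTree) : ℕ :=
  ((subtreesList t).map (fun s => if s ∈ S then 1 else 0)).sum

inductive IsNFRoot : PTree → PTree → Prop
  | leaf (t : PTree) : IsNFRoot (node []) t
  | node {ts ts' : List PTree} (hne : ts ≠ []) (h : List.Forall₂ IsNFRoot ts ts') :
      IsNFRoot (node ts) (node ts')

noncomputable def countNonFringe (T t : PTree) : ℕ :=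
  ((subtreesList t).map (fun s => if IsNFRoot T s then 1 else 0)).sum

def completeRAry (r : ℕ) : ℕ → PTree
  | 0 => node []
  | h + 1 => node (List.replicate r (completeRAry r h))

end PTree

open PTree

/-- The offspring distribution condition: nonnegative probabilities summing to 1,
mean 1, and finite positive variance. -/
def OffspringCond (p : ℕ → ℝ) : Prop :=
  (∀ i, 0 ≤ p i) ∧ HasSum p 1 ∧ HasSum (fun i : ℕ => (i : ℝ) * p i) 1 ∧
    Summable (fun i : ℕ => (i : ℝ) ^ 2 * p i) ∧ 1 < ∑' i : ℕ, (i : ℝ) ^ 2 * p i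

/-- `piSet p S = ∑_{T ∈ S} π(T)`. -/
noncomputable def piSet (p : ℕ → ℝ) (S : Set PTree) : ℝ := ∑' T : S, gwProb p T.1

/-- Probability that the conditional Galton-Watson tree of size `n` satisfies `E`. -/
noncomputable def probGW (p : ℕ → ℝ) (n : ℕ) (E : PTree → Prop) : ℝ :=
  (∑' T : {T : PTree // size T = n ∧ E T}, gwProb p T.1) / piSet p {T | size T = n}

/-- Expectation of `f` under the conditional Galton-Watson tree of size `n`. -/
noncomputable def expGW (p : ℕ → ℝ) (n : ℕ) (f : PTree → ℝ) : ℝ :=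
  (∑' T : {T : PTree // size T = n}, f T.1 * gwProb p T.1) / piSet p {T | size T = n}

noncomputable def varGW (p : ℕ → ℝ) (n : ℕ) (f : PTree → ℝ) : ℝ :=
  expGW p n (fun T => (f T - expGW p n f) ^ 2)

/-- The filter "n → ∞ along the subsequence where `𝒯_n` is well-defined". -/
noncomputable def alongGW (p : ℕ → ℝ) : Filter ℕ :=
  Filter.atTop ⊓ Filter.principal {n | 0 < piSet p {T | size T = n}}

/-- Total variation distance between two (sub)probability mass functions on ℕ. -/
noncomputable def tvDist (f g : ℕ → ℝ) : ℝ :=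
  ⨆ A : Set ℕ, |(∑' m : A, f m.1) - (∑' m : A, g m.1)|

/-- The Poisson probability mass function with mean `μ`. -/
noncomputable def poissonPMF (μ : ℝ) (m : ℕ) : ℝ :=
  Real.exp (-μ) * μ ^ m / (m.factorial : ℝ)

/-- The standard normal cumulative distribution function. -/
noncomputable def stdNormalCDF (x : ℝ) : ℝ :=
  ∫ t in Set.Iic x, (Real.sqrt (2 * Real.pi))⁻¹ * Real.exp (-t ^ 2 / 2)

/-- `𝒯⁺_k`: all possible trees of size at most `k`. -/
def TPlus (p : ℕ → ℝ) (k : ℕ) : Set PTree := {T | size T ≤ k ∧ 0 < gwProb p T}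

/-- `p^min_k`, the minimal probability of a possible tree of size at most `k`. -/
noncomputable def pmin (p : ℕ → ℝ) (k : ℕ) : ℝ := sInf (gwProb p '' TPlus p k)

/-- `K_n(t)`: the maximal `k` such that every possible tree of size at most `k`
occurs as a fringe subtree of `t`. -/
noncomputable def maxAllFringe (p : ℕ → ℝ) (t : PTree) : ℕ :=
  sSup {k | ∀ T ∈ TPlus p k, T ∈ subtreesList t}

/-- `H_{n,r}(t)`: the maximal `h` such that every complete `r`-ary tree of height
at most `h` occurs as a fringe subtree of `t`. -/
noncomputable def maxRAryHeight (r : ℕ) (t : PTree) : ℕ :=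
  sSup {j | ∀ i ≤ j, completeRAry r i ∈ subtreesList t}

/-- The distribution of the sum of `m` i.i.d. copies of the offspring distribution:
`probSum p m s = P(S_m = s)`. -/
noncomputable def probSum (p : ℕ → ℝ) : ℕ → ℕ → ℝ
  | 0, s => if s = 0 then 1 else 0
  | m + 1, s => ∑ j ∈ Finset.range (s + 1), p j * probSum p m (s - j)

namespace PTree

@[simp] lemma size_node (ts : List PTree) : size (node ts) = 1 + sizeList ts := by rw [size]
@[simp] lemma sizeList_nil : sizeList [] = 0 := by rw [sizeList]
@[simp] lemma sizeList_cons (t : PTree) (ts : List PTree) :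
    sizeList (t :: ts) = size t + sizeList ts := by rw [sizeList]
@[simp] lemma gwProb_node (p : ℕ → ℝ) (ts : List PTree) :
    gwProb p (node ts) = p ts.length * gwProbList p ts := by rw [gwProb]
@[simp] lemma gwProbList_nil (p : ℕ → ℝ) : gwProbList p [] = 1 := by rw [gwProbList]
@[simp] lemma gwProbList_cons (p : ℕ → ℝ) (t : PTree) (ts : List PTree) :
    gwProbList p (t :: ts) = gwProb p t * gwProbList p ts := by rw [gwProbList]

lemma one_le_size (T : PTree) : 1 ≤ size T := by
  cases T; simp

section Probability

variable {p : ℕ → ℝ}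

lemma gwProb_nonneg (hp : ∀ i, 0 ≤ p i) (T : PTree) : 0 ≤ gwProb p T :=
  PTree.rec (motive_1 := fun T => 0 ≤ gwProb p T) (motive_2 := fun ts => 0 ≤ gwProbList p ts)
    (fun _ h => by simpa using mul_nonneg (hp _) h) (by simp)
    (fun _ _ ht hts => by simpa using mul_nonneg ht hts) T

lemma gwProbList_nonneg (hp : ∀ i, 0 ≤ p i) (ts : List PTree) : 0 ≤ gwProbList p ts := by
  induction ts with
  | nil => simp
  | cons t ts ih => simpa using mul_nonneg (gwProb_nonneg hp t) ih

/-- Stated with an extra factor `L` rather than with the truncated `size T - 1`. -/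
theorem mul_pow_size_le_mul_gwProb (hp : ∀ i, 0 ≤ p i) (hp0 : 0 < p 0) {L : ℝ} (hL : 0 ≤ L)
    (hdeg : ∀ d, 0 < p d → p 0 * L ^ d ≤ p 0 ^ d * p d) (T : PTree) (hT : 0 < gwProb p T) :
    p 0 * L ^ size T ≤ L * gwProb p T := by
  refine PTree.rec
    (motive_1 := fun T => 0 < gwProb p T → p 0 * L ^ size T ≤ L * gwProb p T)
    (motive_2 := fun ts => 0 < gwProbList p ts →
      p 0 ^ ts.length * L ^ sizeList ts ≤ L ^ ts.length * gwProbList p ts)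
    ?node ?nil ?cons T hT
  case node =>
    intro ts ih hpos
    simp only [gwProb_node, size_node] at hpos ⊢
    have hd := pos_of_mul_pos_left hpos (gwProbList_nonneg hp ts)
    have hG := pos_of_mul_pos_right hpos (hp _)
    refine le_of_mul_le_mul_left ?_ (pow_pos hp0 ts.length)
    calc p 0 ^ ts.length * (p 0 * L ^ (1 + sizeList ts))
        = (p 0 * L) * (p 0 ^ ts.length * L ^ sizeList ts) := by ring
      _ ≤ (p 0 * L) * (L ^ ts.length * gwProbList p ts) :=
          mul_le_mul_of_nonneg_left (ih hG) (by positivity)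
      _ = (L * gwProbList p ts) * (p 0 * L ^ ts.length) := by ring
      _ ≤ (L * gwProbList p ts) * (p 0 ^ ts.length * p ts.length) :=
          mul_le_mul_of_nonneg_left (hdeg _ hd) (by positivity)
      _ = p 0 ^ ts.length * (L * (p ts.length * gwProbList p ts)) := by ring
  case nil => simp
  case cons =>
    intro t ts ht hts hpos
    simp only [gwProbList_cons, sizeList_cons, List.length_cons] at hpos ⊢
    have ht' := pos_of_mul_pos_left hpos (gwProbList_nonneg hp ts)
    have hts' := pos_of_mul_pos_right hpos (gwProb_nonneg hp t)
    calc p 0 ^ (ts.length + 1) * L ^ (size t + sizeList ts)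
        = (p 0 * L ^ size t) * (p 0 ^ ts.length * L ^ sizeList ts) := by ring
      _ ≤ (L * gwProb p t) * (L ^ ts.length * gwProbList p ts) :=
          mul_le_mul (ht ht') (hts hts') (by positivity) (by positivity)
      _ = L ^ (ts.length + 1) * (gwProb p t * gwProbList p ts) := by ring

end Probability

def caterpillar (i : ℕ) : ℕ → PTree
  | 0 => node []
  | m + 1 => node (caterpillar i m :: List.replicate (i - 1) (node []))

lemma size_caterpillar {i : ℕ} (hi : i ≠ 0) (m : ℕ) : size (caterpillar i m) = m * i + 1 := by
  have hleaves (n : ℕ) : sizeList (List.replicate n (node [])) = n := by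
    induction n with
    | zero => simp
    | succ n ih => simp [List.replicate_succ, ih]; omega
  induction m with
  | zero => simp [caterpillar]
  | succ m ih =>
    rw [caterpillar, size_node, sizeList_cons, hleaves, ih, Nat.succ_mul]
    omega

lemma gwProb_caterpillar (p : ℕ → ℝ) {i : ℕ} (hi : i ≠ 0) (m : ℕ) :
    gwProb p (caterpillar i m) = p 0 * (p i * p 0 ^ (i - 1)) ^ m := by
  have hleaves (n : ℕ) : gwProbList p (List.replicate n (node [])) = p 0 ^ n := by
    induction n with
    | zero => simp
    | succ n ih => simp [List.replicate_succ, ih, pow_succ']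
  induction m with
  | zero => simp [caterpillar]
  | succ m ih =>
    rw [caterpillar, gwProb_node, gwProbList_cons, hleaves, ih, List.length_cons,
      List.length_replicate, Nat.sub_add_cancel (Nat.one_le_iff_ne_zero.2 hi)]
    ring

end PTree

lemma tendsto_pred_div_div_natCast {i : ℕ} (hi : i ≠ 0) :
    Tendsto (fun k : ℕ => (((k - 1) / i : ℕ) : ℝ) / k) atTop (𝓝 (1 / i)) := by
  have hi' : (0 : ℝ) < i := by positivity
  have hlower : Tendsto (fun k : ℕ => 1 / (i : ℝ) - 1 / k) atTop (𝓝 (1 / i)) := by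
    simpa using (tendsto_const_nhds (x := 1 / (i : ℝ))).sub tendsto_one_div_atTop_nhds_zero_nat
  refine tendsto_of_tendsto_of_tendsto_of_le_of_le' hlower tendsto_const_nhds ?_ ?_
  · filter_upwards [eventually_ge_atTop 1] with k hk
    have hnat : k ≤ (k - 1) / i * i + i := by
      have := Nat.lt_div_mul_add (a := k - 1) (Nat.pos_of_ne_zero hi)
      omega
    have hreal : (k : ℝ) ≤ (((k - 1) / i : ℕ) : ℝ) * i + i := by exact_mod_cast hnat
    rw [sub_le_iff_le_add, ← add_div, div_le_div_iff₀ hi' (by positivity)]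
    linarith
  · filter_upwards with k
    have hreal : (((k - 1) / i : ℕ) : ℝ) * i ≤ k := by
      exact_mod_cast (Nat.div_mul_le_self _ _).trans (Nat.sub_le _ _)
    rcases k.eq_zero_or_pos with rfl | hk
    · simp
    rw [div_le_div_iff₀ (by exact_mod_cast hk) hi', one_mul]
    exact hreal

lemma tendsto_mul_pow_pred_div_rpow {x c : ℝ} (hx : 0 < x) (hc : 0 < c) {i : ℕ} (hi : i ≠ 0) :
    Tendsto (fun k : ℕ => (x * c ^ ((k - 1) / i)) ^ (1 / (k : ℝ))) atTop
      (𝓝 (c ^ (1 / i : ℝ))) := by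
  have hx' := ((Real.continuousAt_const_rpow hx.ne' (b := 0)).tendsto).comp
    tendsto_one_div_atTop_nhds_zero_nat
  have hc' := ((Real.continuousAt_const_rpow hc.ne' (b := 1 / i)).tendsto).comp
    (tendsto_pred_div_div_natCast hi)
  have h := hx'.mul hc'
  rw [Real.rpow_zero, one_mul] at h
  refine h.congr fun k => ?_
  simp only [Function.comp_apply]
  rw [Real.mul_rpow hx.le (by positivity), ← Real.rpow_natCast, ← Real.rpow_mul hc.le,
    mul_one_div]

namespace OffspringCond

variable {p : ℕ → ℝ}

lemma le_one (hp : OffspringCond p) (i : ℕ) : p i ≤ 1 :=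
  le_hasSum hp.2.1 i fun j _ => hp.1 j

lemma add_le_one (hp : OffspringCond p) {i : ℕ} (hi : i ≠ 0) : p 0 + p i ≤ 1 := by
  simpa [Finset.sum_pair hi.symm] using sum_le_hasSum {0, i} (fun j _ => hp.1 j) hp.2.1

lemma exists_pos (hp : OffspringCond p) : ∃ i, i ≠ 0 ∧ 0 < p i := by
  by_contra! h
  have hzero : (fun i : ℕ => (i : ℝ) * p i) = 0 := by
    funext i
    rcases eq_or_ne i 0 with rfl | hi
    · simp
    · simp [le_antisymm (h i hi) (hp.1 i)]
  exact one_ne_zero (hp.2.2.1.unique (hzero ▸ hasSum_zero))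

/-- If `p 0 = 0`, mean one forces `p 1 = 1`, contradicting positive variance. -/
lemma p_zero_pos (hp : OffspringCond p) : 0 < p 0 := by
  obtain ⟨hnn, hsum, hmean, -, hvar⟩ := hp
  refine (hnn 0).lt_of_ne fun h0 => hvar.ne' ?_
  have hexcess : HasSum (fun i : ℕ => ((i : ℝ) - 1) * p i) 0 := by
    simpa [sub_mul] using hmean.sub hsum
  have hterms : (fun i : ℕ => ((i : ℝ) - 1) * p i) = 0 := by
    refine (hasSum_zero_iff_of_nonneg fun i => ?_).1 hexcess
    rcases i with _ | i
    · simp [← h0]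
    · simpa using mul_nonneg (Nat.cast_nonneg i) (hnn (i + 1))
  have hsq : (fun i : ℕ => (i : ℝ) ^ 2 * p i) = fun i : ℕ => (i : ℝ) * p i := by
    funext i
    have hi : ((i : ℝ) - 1) * p i = 0 := congrFun hterms i
    linear_combination (i : ℝ) * hi
  rw [hsq, hmean.tsum_eq]

end OffspringCond

/-- The `k`-th root of the probability of `caterpillar i m`, to leading order in `k = m i`. -/
noncomputable def caterpillarRate (p : ℕ → ℝ) (i : ℕ) : ℝ :=
  p 0 * (p i / p 0) ^ (1 / (i : ℝ))

noncomputable def pminRate (p : ℕ → ℝ) : ℝ :=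
  sInf (caterpillarRate p '' {i : ℕ | 1 ≤ i ∧ 0 < p i})

section Rate

variable {p : ℕ → ℝ}

lemma caterpillarRate_nonneg (hp : OffspringCond p) (i : ℕ) : 0 ≤ caterpillarRate p i :=
  mul_nonneg (hp.1 0) (Real.rpow_nonneg (div_nonneg (hp.1 i) (hp.1 0)) _)

lemma caterpillarRate_pow (hp : OffspringCond p) {i : ℕ} (hi : i ≠ 0) :
    caterpillarRate p i ^ i = p i * p 0 ^ (i - 1) := by
  have hp0 := hp.p_zero_pos
  rw [caterpillarRate, mul_pow, one_div, Real.rpow_inv_natCast_pow (div_nonneg (hp.1 i) hp0.le) hi]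
  obtain ⟨j, rfl⟩ := Nat.exists_eq_succ_of_ne_zero hi
  rw [Nat.succ_sub_one, pow_succ]
  field_simp

lemma caterpillarRate_eq_rpow (hp : OffspringCond p) {i : ℕ} (hi : i ≠ 0) :
    caterpillarRate p i = (p i * p 0 ^ (i - 1)) ^ (1 / i : ℝ) := by
  rw [← caterpillarRate_pow hp hi, one_div,
    Real.pow_rpow_inv_natCast (caterpillarRate_nonneg hp i) hi]

lemma pminRate_nonneg (hp : OffspringCond p) : 0 ≤ pminRate p :=
  Real.sInf_nonneg <| by rintro _ ⟨i, -, rfl⟩; exact caterpillarRate_nonneg hp i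

lemma pminRate_le (hp : OffspringCond p) {i : ℕ} (hi : i ≠ 0) (hpi : 0 < p i) :
    pminRate p ≤ caterpillarRate p i :=
  csInf_le ⟨0, by rintro _ ⟨j, -, rfl⟩; exact caterpillarRate_nonneg hp j⟩
    ⟨i, ⟨Nat.one_le_iff_ne_zero.2 hi, hpi⟩, rfl⟩

lemma exists_caterpillarRate_lt (hp : OffspringCond p) {b : ℝ} (hb : pminRate p < b) :
    ∃ i, i ≠ 0 ∧ 0 < p i ∧ caterpillarRate p i < b := by
  obtain ⟨i, hi, hpi⟩ := hp.exists_pos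
  have hne : (caterpillarRate p '' {i : ℕ | 1 ≤ i ∧ 0 < p i}).Nonempty :=
    ⟨_, i, ⟨Nat.one_le_iff_ne_zero.2 hi, hpi⟩, rfl⟩
  obtain ⟨_, ⟨j, ⟨hj, hpj⟩, rfl⟩, hjb⟩ := exists_lt_of_csInf_lt hne hb
  exact ⟨j, Nat.one_le_iff_ne_zero.1 hj, hpj, hjb⟩

lemma pminRate_lt_one (hp : OffspringCond p) : pminRate p < 1 := by
  obtain ⟨i, hi, hpi⟩ := hp.exists_pos
  refine (pminRate_le hp hi hpi).trans_lt ?_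
  rw [← pow_lt_one_iff_of_nonneg (caterpillarRate_nonneg hp i) hi, caterpillarRate_pow hp hi]
  have hpi1 : p i < 1 := by linarith [hp.add_le_one hi, hp.p_zero_pos]
  calc p i * p 0 ^ (i - 1) ≤ p i :=
        mul_le_of_le_one_right (hp.1 i) (pow_le_one₀ (hp.1 0) (hp.le_one 0))
    _ < 1 := hpi1

lemma mul_pminRate_pow_le (hp : OffspringCond p) {d : ℕ} (hd : 0 < p d) :
    p 0 * pminRate p ^ d ≤ p 0 ^ d * p d := by
  rcases eq_or_ne d 0 with rfl | hd0
  · simp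
  have hpow : pminRate p ^ d ≤ p d * p 0 ^ (d - 1) := by
    rw [← caterpillarRate_pow hp hd0]
    exact pow_le_pow_left₀ (pminRate_nonneg hp) (pminRate_le hp hd0 hd) d
  calc p 0 * pminRate p ^ d ≤ p 0 * (p d * p 0 ^ (d - 1)) :=
        mul_le_mul_of_nonneg_left hpow (hp.1 0)
    _ = p 0 ^ d * p d := by
        rw [mul_left_comm, ← pow_succ', Nat.sub_add_cancel (Nat.one_le_iff_ne_zero.2 hd0),
          mul_comm]

end Rate

section Pmin

variable {p : ℕ → ℝ}

lemma pmin_nonneg (hp : ∀ i, 0 ≤ p i) (k : ℕ) : 0 ≤ pmin p k :=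
  Real.sInf_nonneg <| by rintro _ ⟨T, -, rfl⟩; exact gwProb_nonneg hp T

lemma pmin_le_gwProb (hp : ∀ i, 0 ≤ p i) {k : ℕ} {T : PTree} (hT : T ∈ TPlus p k) :
    pmin p k ≤ gwProb p T :=
  csInf_le ⟨0, by rintro _ ⟨T, -, rfl⟩; exact gwProb_nonneg hp T⟩ ⟨T, hT, rfl⟩

lemma pmin_le_caterpillar (hp : OffspringCond p) {i k : ℕ} (hi : i ≠ 0) (hpi : 0 < p i)
    (hk : 1 ≤ k) : pmin p k ≤ p 0 * (p i * p 0 ^ (i - 1)) ^ ((k - 1) / i) := by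
  rw [← gwProb_caterpillar p hi]
  refine pmin_le_gwProb hp.1 ⟨?_, ?_⟩
  · rw [size_caterpillar hi]
    have := Nat.div_mul_le_self (k - 1) i
    omega
  · rw [gwProb_caterpillar p hi]
    have := hp.p_zero_pos
    positivity

lemma mul_pminRate_pow_le_pmin (hp : OffspringCond p) (hL : 0 < pminRate p) {k : ℕ}
    (hk : 1 ≤ k) : p 0 * pminRate p ^ (k - 1) ≤ pmin p k := by
  have hp0 := hp.p_zero_pos
  have hleaf : node [] ∈ TPlus p k := ⟨by simpa using hk, by simpa using hp0⟩
  refine le_csInf ⟨_, _, hleaf, rfl⟩ ?_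
  rintro _ ⟨T, ⟨hTk, hT⟩, rfl⟩
  have hsize : size T - 1 + 1 = size T := Nat.sub_add_cancel (one_le_size T)
  have hbound := mul_pow_size_le_mul_gwProb hp.1 hp0 hL.le (fun d => mul_pminRate_pow_le hp) T hT
  rw [← hsize, pow_succ, ← mul_assoc, mul_comm _ (gwProb p T)] at hbound
  calc p 0 * pminRate p ^ (k - 1) ≤ p 0 * pminRate p ^ (size T - 1) :=
        mul_le_mul_of_nonneg_left
          (pow_le_pow_of_le_one hL.le (pminRate_lt_one hp).le (by omega)) hp0.le
    _ ≤ gwProb p T := le_of_mul_le_mul_right hbound hL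

theorem tendsto_pmin_rpow (hp : OffspringCond p) :
    Tendsto (fun k : ℕ => pmin p k ^ (1 / (k : ℝ))) atTop (𝓝 (pminRate p)) := by
  have hp0 := hp.p_zero_pos
  rw [tendsto_order]
  constructor
  · intro a ha
    rcases lt_or_ge a 0 with ha0 | ha0
    · exact Eventually.of_forall fun k => ha0.trans_le (Real.rpow_nonneg (pmin_nonneg hp.1 k) _)
    have hL : 0 < pminRate p := ha0.trans_lt ha
    have hlim := tendsto_mul_pow_pred_div_rpow hp0 hL one_ne_zero
    simp only [Nat.div_one, Nat.cast_one, div_one, Real.rpow_one] at hlim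
    filter_upwards [(tendsto_order.1 hlim).1 a ha, eventually_ge_atTop 1] with k hak hk
    exact hak.trans_le <| Real.rpow_le_rpow (by positivity)
      (mul_pminRate_pow_le_pmin hp hL hk) (by positivity)
  · intro b hb
    obtain ⟨i, hi, hpi, hib⟩ := exists_caterpillarRate_lt hp hb
    have hlim := tendsto_mul_pow_pred_div_rpow hp0 (c := p i * p 0 ^ (i - 1)) (by positivity) hi
    rw [← caterpillarRate_eq_rpow hp hi] at hlim
    filter_upwards [(tendsto_order.1 hlim).2 b hib, eventually_ge_atTop 1] with k hkb hk
    exact (Real.rpow_le_rpow (pmin_nonneg hp.1 k) (pmin_le_caterpillar hp hi hpi hk)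
      (by positivity)).trans_lt hkb

end Pmin

/-- Theorem 4.9: `(p^min_k)^{1/k} → L` as `k → ∞` along the subsequence where
`π(𝒮_k) > 0`, where `L = inf { p_0 (p_i/p_0)^{1/i} : i ≥ 1, p_i > 0 }`;
consequently `L < 1`. -/
theorem pmin_kth_root_limit
    (p : ℕ → ℝ) (hp : OffspringCond p) :
    let L : ℝ :=
      sInf ((fun i : ℕ => p 0 * (p i / p 0) ^ (1 / (i : ℝ))) '' {i : ℕ | 1 ≤ i ∧ 0 < p i})
    Tendsto (fun k : ℕ => pmin p k ^ (1 / (k : ℝ))) (alongGW p) (𝓝 L) ∧ L < 1 :=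
  ⟨(tendsto_pmin_rpow hp).mono_left inf_le_left, pminRate_lt_one hp⟩
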